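/- Let L be a language over an alphabet Σ. Suppose that for every natural number n there exist strings P₁, P₂, P₃, P₄ such that (i) the concatenation w = P₁P₂P₃P₄ belongs to L, (ii) |Pᵢ| ≥ n for every i ∈ {1,2,3,4}, (iii) L has a pump-sensitive linkage (P₁, P₃) on this factorization, and (iv) L has a pump-sensitive linkage (P₂, P₄) on this factorization. Then L is not context-free. -/

import Mathlib

/-- Start position (0-indexed) of segment `i` in the concatenation of the segments `Ps`. -/
def segStart {α : Type} (Ps : List (List α)) (i : ℕ) : ℕ :=
  ((Ps.take i).map List.length).sum

/-- The set of (0-indexed) positions occupied by segment `i` of the factorization `Ps`. -/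
def segRange {α : Type} (Ps : List (List α)) (i : ℕ) : Set ℕ :=
  Set.Ico (segStart Ps i) (segStart Ps i + (Ps.getD i []).length)

/-- The set of positions occupied by the substring `v ++ x ++ y` inside `u ++ v ++ x ++ y ++ z`. -/
def vxyRange {α : Type} (u v x y : List α) : Set ℕ :=
  Set.Ico u.length (u.length + (v.length + x.length + y.length))

/-- `L` has a pump-sensitive linkage `(P_i, P_j)` on the factorization `Ps = [P₁, …, P_k]`:
for every factorization `u v x y z` of the concatenated word with `|v| + |y| ≥ 1` such that
the position range of `v x y` intersects the range of segment `i` and is disjoint from that of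
segment `j`, or vice versa, the pumped word `u v v x y y z` is not in `L`. -/
def HasPumpSensitiveLinkage {α : Type} (L : Language α) (Ps : List (List α)) (i j : ℕ) : Prop :=
  ∀ u v x y z : List α,
    Ps.flatten = u ++ v ++ x ++ y ++ z →
    1 ≤ v.length + y.length →
    (((vxyRange u v x y ∩ segRange Ps i).Nonempty ∧
        Disjoint (vxyRange u v x y) (segRange Ps j)) ∨
     ((vxyRange u v x y ∩ segRange Ps j).Nonempty ∧
        Disjoint (vxyRange u v x y) (segRange Ps i))) →
    u ++ v ++ v ++ x ++ y ++ y ++ z ∉ L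


namespace CFPump
open ContextFreeGrammar

variable {T : Type}

abbrev mt {g : ContextFreeGrammar.{0} T} (w : List T) : List (Symbol T g.NT) :=
  w.map Symbol.terminal

mutual
inductive PT (g : ContextFreeGrammar.{0} T) : g.NT → Type
  | node (r : ContextFreeRule T g.NT) (hr : r ∈ g.rules) (f : PF g r.output) : PT g r.input
inductive PF (g : ContextFreeGrammar.{0} T) : List (Symbol T g.NT) → Type
  | nil : PF g []
  | consT (a : T) {l : List (Symbol T g.NT)} (f : PF g l) : PF g (Symbol.terminal a :: l)
  | consN {n : g.NT} {l : List (Symbol T g.NT)} (t : PT g n) (f : PF g l) :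
      PF g (Symbol.nonterminal n :: l)
end

variable {g : ContextFreeGrammar.{0} T}

mutual
def PT.yield : ∀ {n : g.NT}, PT g n → List T
  | _, .node _ _ f => f.yield
def PF.yield : ∀ {l : List (Symbol T g.NT)}, PF g l → List T
  | _, .nil => []
  | _, .consT a f => a :: f.yield
  | _, .consN t f => t.yield ++ f.yield
end

mutual
def PT.size : ∀ {n : g.NT}, PT g n → ℕ
  | _, .node _ _ f => f.size + 1
def PF.size : ∀ {l : List (Symbol T g.NT)}, PF g l → ℕ
  | _, .nil => 0
  | _, .consT _ f => f.size
  | _, .consN t f => t.size + f.size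
end

mutual
def PT.height : ∀ {n : g.NT}, PT g n → ℕ
  | _, .node _ _ f => f.height + 1
def PF.height : ∀ {l : List (Symbol T g.NT)}, PF g l → ℕ
  | _, .nil => 0
  | _, .consT _ f => f.height
  | _, .consN t f => max t.height f.height
end

mutual
theorem PT.yield_derives : ∀ {n : g.NT} (t : PT g n),
    g.Derives [Symbol.nonterminal n] (mt t.yield)
  | _, .node r hr f =>
    Produces.trans_derives ⟨r, hr, ContextFreeRule.Rewrites.input_output⟩ f.yield_derives
theorem PF.yield_derives : ∀ {l : List (Symbol T g.NT)} (f : PF g l),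
    g.Derives l (mt f.yield)
  | _, .nil => Derives.refl []
  | _, .consT a f => by
      simpa [PF.yield] using f.yield_derives.append_left [Symbol.terminal a]
  | _, .consN (n := n) (l := l) t f => by
      show g.Derives (Symbol.nonterminal n :: l) (mt (t.yield ++ f.yield))
      have h1 : g.Derives ([Symbol.nonterminal n] ++ l) (mt t.yield ++ l) :=
        t.yield_derives.append_right l
      have h2 : g.Derives (mt t.yield ++ l) (mt t.yield ++ mt f.yield) :=
        f.yield_derives.append_left _
      simpa [mt] using h1.trans h2
end


/-- Append two forests. -/
def PF.app : ∀ {l₁ l₂ : List (Symbol T g.NT)}, PF g l₁ → PF g l₂ → PF g (l₁ ++ l₂)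
  | _, _, .nil, f₂ => f₂
  | _, _, .consT a f, f₂ => .consT a (f.app f₂)
  | _, _, .consN t f, f₂ => .consN t (f.app f₂)

theorem PF.yield_app : ∀ {l₁ l₂ : List (Symbol T g.NT)} (f₁ : PF g l₁) (f₂ : PF g l₂),
    (f₁.app f₂).yield = f₁.yield ++ f₂.yield
  | _, _, .nil, f₂ => rfl
  | _, _, .consT a f, f₂ => by simp [PF.app, PF.yield, yield_app f f₂]
  | _, _, .consN t f, f₂ => by simp [PF.app, PF.yield, yield_app f f₂]

theorem PF.size_app : ∀ {l₁ l₂ : List (Symbol T g.NT)} (f₁ : PF g l₁) (f₂ : PF g l₂),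
    (f₁.app f₂).size = f₁.size + f₂.size
  | _, _, .nil, f₂ => by simp [PF.app, PF.size]
  | _, _, .consT a f, f₂ => by simp [PF.app, PF.size, size_app f f₂]
  | _, _, .consN t f, f₂ => by simp [PF.app, PF.size, size_app f f₂, Nat.add_assoc]

/-- Split a forest along an append of index lists. -/
def PF.split : ∀ (l₁ : List (Symbol T g.NT)) {l₂ : List (Symbol T g.NT)},
    PF g (l₁ ++ l₂) → PF g l₁ × PF g l₂
  | [], _, f => (.nil, f)
  | .terminal _ :: l₁, _, .consT a f => (.consT a (PF.split l₁ f).1, (PF.split l₁ f).2)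
  | .nonterminal _ :: l₁, _, .consN t f => (.consN t (PF.split l₁ f).1, (PF.split l₁ f).2)

theorem PF.yield_split : ∀ (l₁ : List (Symbol T g.NT)) {l₂ : List (Symbol T g.NT)}
    (f : PF g (l₁ ++ l₂)), (PF.split l₁ f).1.yield ++ (PF.split l₁ f).2.yield = f.yield
  | [], _, f => rfl
  | .terminal _ :: l₁, _, .consT a f => by
      simp [PF.split, PF.yield, yield_split l₁ f]
  | .nonterminal _ :: l₁, _, .consN t f => by
      simp [PF.split, PF.yield, yield_split l₁ f]

/-- A forest of raw terminals. -/
def PF.ofWord : ∀ (w : List T), PF g (mt w)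
  | [] => .nil
  | a :: w => .consT a (PF.ofWord w)

theorem PF.yield_ofWord : ∀ (w : List T), (PF.ofWord (g := g) w).yield = w
  | [] => rfl
  | a :: w => by simp [PF.ofWord, PF.yield, yield_ofWord w]


theorem exists_forest {l : List (Symbol T g.NT)} {w : List T} (h : g.Derives l (mt w)) :
    ∃ f : PF g l, f.yield = w := by
  induction h using Relation.ReflTransGen.head_induction_on with
  | refl => exact ⟨PF.ofWord w, PF.yield_ofWord w⟩
  | head hp _ ih =>
    obtain ⟨f, hf⟩ := ih
    obtain ⟨r, hr, rew⟩ := hp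
    obtain ⟨p, q, hu, hv⟩ := rew.exists_parts
    subst hu hv
    set f₁ := (PF.split (p ++ r.output) f).1 with hf₁
    set fq := (PF.split (p ++ r.output) f).2 with hfq
    set fp := (PF.split p f₁).1 with hfp
    set fo := (PF.split p f₁).2 with hfo
    refine ⟨(fp.app (.consN (.node r hr fo) .nil)).app fq, ?_⟩
    have e1 := PF.yield_split (p ++ r.output) f
    have e2 := PF.yield_split p f₁
    simp only [PF.yield_app, PF.yield, PT.yield, List.append_nil] at *
    rw [← hf, ← e1, ← e2, List.append_assoc]

theorem exists_tree {n : g.NT} {w : List T}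
    (h : g.Derives [Symbol.nonterminal n] (mt w)) : ∃ t : PT g n, t.yield = w := by
  obtain ⟨f, hf⟩ := exists_forest h
  match f with
  | .consN t .nil => exact ⟨t, by simpa [PF.yield] using hf⟩


theorem derives_lift {s₁ s₂ : List (Symbol T g.NT)} (h : g.Derives s₁ s₂)
    (p q : List (Symbol T g.NT)) : g.Derives (p ++ s₁ ++ q) (p ++ s₂ ++ q) := by
  have := (h.append_left p).append_right q
  simpa [List.append_assoc] using this

theorem derives_context {p q p' q' : List (Symbol T g.NT)} (hp : g.Derives p p')
    (hq : g.Derives q q') (m : List (Symbol T g.NT)) :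
    g.Derives (p ++ m ++ q) (p' ++ m ++ q') := by
  have h1 := hp.append_right (m ++ q)
  have h2 := hq.append_left (p' ++ m)
  simp only [← List.append_assoc] at h1
  exact h1.trans h2

/-- The finite set of nonterminals appearing as rule inputs. -/
noncomputable def NTS (g : ContextFreeGrammar.{0} T) : Finset g.NT :=
  @Finset.image _ _ (Classical.decEq _) (fun r => r.input) g.rules

/-- A constant bounding rule output lengths, at least 2. -/
def Cg (g : ContextFreeGrammar.{0} T) : ℕ :=
  g.rules.sup (fun r => r.output.length) + 2

theorem two_le_Cg : 2 ≤ Cg g := Nat.le_add_left 2 _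

theorem output_le_Cg {r : ContextFreeRule T g.NT} (hr : r ∈ g.rules) :
    r.output.length ≤ Cg g :=
  le_trans (Finset.le_sup (f := fun r => r.output.length) hr) (Nat.le_add_right _ 2)

theorem PT.root_mem {n : g.NT} (t : PT g n) : n ∈ NTS g := by
  letI := Classical.decEq g.NT
  match t with
  | .node r hr _ =>
    exact Finset.mem_image_of_mem _ hr

mutual
theorem PT.yield_le : ∀ {n : g.NT} (t : PT g n), t.yield.length ≤ Cg g ^ t.height
  | _, .node r hr f => by
      have := f.yield_le
      have hC : 2 ≤ Cg g := two_le_Cg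
      have hout : r.output.length ≤ Cg g := output_le_Cg hr
      simp only [PT.yield, PT.height]
      calc f.yield.length ≤ r.output.length * Cg g ^ f.height := this
        _ ≤ Cg g * Cg g ^ f.height := Nat.mul_le_mul_right _ hout
        _ = Cg g ^ (f.height + 1) := by ring
theorem PF.yield_le : ∀ {l : List (Symbol T g.NT)} (f : PF g l),
    f.yield.length ≤ l.length * Cg g ^ f.height
  | _, .nil => by simp [PF.yield]
  | _, .consT (l := l) a f => by
      have h0 := f.yield_le
      have hC : 2 ≤ Cg g := two_le_Cg
      have h1 : 1 ≤ Cg g ^ f.height := Nat.one_le_pow _ _ (by omega)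
      simp only [PF.yield, PF.height, List.length_cons]
      nlinarith
  | _, .consN (l := l) t f => by
      have h1 := t.yield_le
      have h2 := f.yield_le
      have hC : 2 ≤ Cg g := two_le_Cg
      have m1 : Cg g ^ t.height ≤ Cg g ^ (max t.height f.height) :=
        Nat.pow_le_pow_right (by omega) (le_max_left _ _)
      have m2 : Cg g ^ f.height ≤ Cg g ^ (max t.height f.height) :=
        Nat.pow_le_pow_right (by omega) (le_max_right _ _)
      simp only [PF.yield, PF.height, List.length_cons, List.length_append]
      calc t.yield.length + f.yield.length
          ≤ Cg g ^ t.height + l.length * Cg g ^ f.height := by omega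
        _ ≤ Cg g ^ (max t.height f.height) + l.length * Cg g ^ (max t.height f.height) := by
            exact Nat.add_le_add m1 (Nat.mul_le_mul_left _ m2)
        _ = (l.length + 1) * Cg g ^ (max t.height f.height) := by ring
end

theorem PF.descend : ∀ {l : List (Symbol T g.NT)} (f : PF g l), 1 ≤ f.height →
    ∃ (n' : g.NT) (c : PT g n') (a b : List T) (l₁ l₂ : List (Symbol T g.NT)),
      l = l₁ ++ [Symbol.nonterminal n'] ++ l₂ ∧
      c.height = f.height ∧
      f.yield = a ++ c.yield ++ b ∧
      g.Derives l₁ (mt a) ∧ g.Derives l₂ (mt b) ∧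
      c.size ≤ f.size ∧
      ∀ s : PT g n', ∃ f' : PF g l, f'.yield = a ++ s.yield ++ b ∧
        f'.size + c.size = f.size + s.size
  | _, .nil, h => by simp [PF.height] at h
  | _, .consT (l := l) a f, h => by
      obtain ⟨n', c, av, b, l₁, l₂, hl, hh, hy, hda, hdb, hsz, hrep⟩ :=
        f.descend (by simpa [PF.height] using h)
      refine ⟨n', c, a :: av, b, Symbol.terminal a :: l₁, l₂, by simp [hl], ?_, ?_, ?_, hdb, ?_, ?_⟩
      · simpa [PF.height] using hh
      · simp [PF.yield, hy]
      · simpa [mt] using hda.append_left [Symbol.terminal a]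
      · simpa [PF.size] using hsz
      · intro s
        obtain ⟨f', h1, h2⟩ := hrep s
        exact ⟨.consT a f', by simp [PF.yield, h1], by simpa [PF.size] using h2⟩
  | _, .consN (n := n) (l := l) t f, h => by
      by_cases hc : f.height ≤ t.height
      · have ht1 : 1 ≤ t.height := by
          simp only [PF.height] at h; omega
        refine ⟨n, t, [], f.yield, [], l, by simp, ?_, by simp [PF.yield],
          Derives.refl [], ?_, ?_, ?_⟩
        · simp [PF.height, Nat.max_eq_left hc]
        · exact f.yield_derives
        · simp only [PF.size]; omega
        · intro s
          refine ⟨.consN s f, by simp [PF.yield], ?_⟩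
          simp only [PF.size]; omega
      · push_neg at hc
        obtain ⟨n', c, av, b, l₁, l₂, hl, hh, hy, hda, hdb, hsz, hrep⟩ :=
          f.descend (by omega)
        refine ⟨n', c, t.yield ++ av, b, Symbol.nonterminal n :: l₁, l₂, by simp [hl], ?_,
          ?_, ?_, hdb, ?_, ?_⟩
        · simp only [PF.height]; omega
        · simp [PF.yield, hy, List.append_assoc]
        · have h1 : g.Derives ([Symbol.nonterminal n] ++ l₁) (mt t.yield ++ l₁) :=
            t.yield_derives.append_right l₁
          have h2 : g.Derives (mt t.yield ++ l₁) (mt t.yield ++ mt av) :=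
            hda.append_left _
          simpa [mt] using h1.trans h2
        · simp only [PF.size]; omega
        · intro s
          obtain ⟨f', h1, h2⟩ := hrep s
          refine ⟨.consN t f', by simp [PF.yield, h1, List.append_assoc], ?_⟩
          simp only [PF.size] at *; omega

theorem PT.descend {n : g.NT} (t : PT g n) (h2 : 2 ≤ t.height) :
    ∃ (n' : g.NT) (c : PT g n') (a b : List T),
      c.height + 1 = t.height ∧
      t.yield = a ++ c.yield ++ b ∧
      c.size < t.size ∧
      g.Derives [Symbol.nonterminal n] (mt a ++ [Symbol.nonterminal n'] ++ mt b) ∧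
      ∀ s : PT g n', ∃ t' : PT g n, t'.yield = a ++ s.yield ++ b ∧
        t'.size + c.size = t.size + s.size := by
  match t with
  | .node r hr f =>
    have hf : 1 ≤ f.height := by simp only [PT.height] at h2; omega
    obtain ⟨n', c, av, b, l₁, l₂, hl, hh, hy, hda, hdb, hsz, hrep⟩ := f.descend hf
    refine ⟨n', c, av, b, ?_, ?_, ?_, ?_, ?_⟩
    · simp only [PT.height]; omega
    · simpa [PT.yield] using hy
    · simp only [PT.size]; omega
    · have h0 : g.Produces [Symbol.nonterminal r.input] r.output :=
        ⟨r, hr, ContextFreeRule.Rewrites.input_output⟩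
      rw [hl] at h0
      exact h0.trans_derives (derives_context hda hdb _)
    · intro s
      obtain ⟨f', hy', hs'⟩ := hrep s
      refine ⟨.node r hr f', by simpa [PT.yield] using hy', ?_⟩
      simp only [PT.size]; omega


/-- Data carried for each nonterminal previously visited on the current root path. -/
structure Entry (g : ContextFreeGrammar.{0} T) {n₁ : g.NT} (t₁ : PT g n₁)
    {n : g.NT} (t : PT g n) : Type where
  A : g.NT
  U : List T
  u : List T
  v : List T
  V : List T
  S : ℕ
  hyield : t₁.yield = U ++ u ++ t.yield ++ v ++ V
  htop : g.Derives [Symbol.nonterminal n₁] (mt U ++ [Symbol.nonterminal A] ++ mt V)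
  hmid : g.Derives [Symbol.nonterminal A] (mt u ++ [Symbol.nonterminal n] ++ mt v)
  hS : t.size < S
  hrepl : ∀ s : PT g A, ∃ t' : PT g n₁, t'.yield = U ++ s.yield ++ V ∧
    t'.size + S ≤ t₁.size + s.size

/-- The conclusion of the pumping extraction, relative to `t₁`. -/
def PumpData (g : ContextFreeGrammar.{0} T) {n₁ : g.NT} (t₁ : PT g n₁) : Prop :=
  ∃ (A : g.NT) (u v x y z : List T),
    t₁.yield = u ++ v ++ x ++ y ++ z ∧
    g.Derives [Symbol.nonterminal n₁] (mt u ++ [Symbol.nonterminal A] ++ mt z) ∧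
    g.Derives [Symbol.nonterminal A] (mt v ++ [Symbol.nonterminal A] ++ mt y) ∧
    g.Derives [Symbol.nonterminal A] (mt x) ∧
    ∃ t'' : PT g n₁, t''.yield = u ++ x ++ z ∧ t''.size < t₁.size

theorem core (g : ContextFreeGrammar.{0} T) : ∀ (h : ℕ) {n₁ : g.NT} (t₁ : PT g n₁)
    {n : g.NT} (t : PT g n) (_ : t.height ≤ h)
    (seen : List (Entry g t₁ t)) (U V : List T)
    (_ : t₁.yield = U ++ t.yield ++ V)
    (_ : g.Derives [Symbol.nonterminal n₁] (mt U ++ [Symbol.nonterminal n] ++ mt V))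
    (_ : ∀ s : PT g n, ∃ t' : PT g n₁, t'.yield = U ++ s.yield ++ V ∧
      t'.size + t.size ≤ t₁.size + s.size)
    (_ : letI := Classical.decEq g.NT
      (NTS g \ (seen.map Entry.A).toFinset).card + 1 ≤ t.height),
    PumpData g t₁ := by
  letI := Classical.decEq g.NT
  intro h
  induction h with
  | zero =>
    intro n₁ t₁ n t ht seen U V hyield htop hrepl hcard
    omega
  | succ h ih =>
    intro n₁ t₁ n t ht seen U V hyield htop hrepl hcard
    by_cases hn : ∃ e ∈ seen, e.A = n
    · -- found a repetition
      obtain ⟨⟨A, Ue, ue, ve, Ve, Se, hyielde, htope, hmide, hSe, hreple⟩, hmem, hA⟩ := hn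
      simp only at hA
      subst hA
      refine ⟨A, Ue, ue, t.yield, ve, Ve, ?_, htope, hmide, t.yield_derives, ?_⟩
      · simpa [List.append_assoc] using hyielde
      · obtain ⟨t', h1, h2⟩ := hreple t
        exact ⟨t', by simpa [List.append_assoc] using h1, by omega⟩
    · push_neg at hn
      -- n is fresh
      have hnmem : n ∈ NTS g \ (seen.map Entry.A).toFinset := by
        simp only [Finset.mem_sdiff, List.mem_toFinset, List.mem_map]
        exact ⟨t.root_mem, by rintro ⟨e, he, hq⟩; exact (hn e he hq).elim⟩
      have hcard1 : 1 ≤ (NTS g \ (seen.map Entry.A).toFinset).card :=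
        Finset.card_pos.mpr ⟨n, hnmem⟩
      have ht2 : 2 ≤ t.height := by omega
      obtain ⟨n', c, a, b, hh, hy, hsz, hctx, hrep⟩ := t.descend ht2
      -- new context
      have htop' : g.Derives [Symbol.nonterminal n₁]
          (mt (U ++ a) ++ [Symbol.nonterminal n'] ++ mt (b ++ V)) := by
        refine htop.trans ?_
        have := derives_lift hctx (mt U) (mt V)
        simpa [mt, List.append_assoc] using this
      have hyield' : t₁.yield = (U ++ a) ++ c.yield ++ (b ++ V) := by
        rw [hyield, hy]; simp [List.append_assoc]
      have hrepl' : ∀ s : PT g n', ∃ t' : PT g n₁,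
          t'.yield = (U ++ a) ++ s.yield ++ (b ++ V) ∧
          t'.size + c.size ≤ t₁.size + s.size := by
        intro s
        obtain ⟨tn, htn1, htn2⟩ := hrep s
        obtain ⟨t', h1, h2⟩ := hrepl tn
        refine ⟨t', by rw [h1, htn1]; simp [List.append_assoc], by omega⟩
      -- updated entries
      let centry : Entry g t₁ t → Entry g t₁ c := fun e =>
        ⟨e.A, e.U, e.u ++ a, b ++ e.v, e.V, e.S,
          by rw [e.hyield, hy]; simp [List.append_assoc],
          e.htop,
          by

            refine e.hmid.trans ?_
            have := derives_lift hctx (mt e.u) (mt e.v)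
            simpa [mt, List.append_assoc] using this,
          by have := e.hS; omega,
          e.hrepl⟩
      let enew : Entry g t₁ c :=
        ⟨n, U, a, b, V, t.size, by rw [hyield, hy]; simp [List.append_assoc],
          htop, hctx, by omega, hrepl⟩
      refine ih t₁ c (by omega) (enew :: seen.map centry) (U ++ a) (b ++ V)
        hyield' htop' hrepl' ?_
      -- cardinality bookkeeping
      have hsub : NTS g \ ((enew :: seen.map centry).map Entry.A).toFinset ⊆
          (NTS g \ (seen.map Entry.A).toFinset).erase n := by
        intro x hx
        rw [Finset.mem_sdiff] at hx
        obtain ⟨hx1, hx2⟩ := hx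
        rw [Finset.mem_erase, Finset.mem_sdiff]
        refine ⟨?_, hx1, ?_⟩
        · rintro rfl
          exact hx2 (List.mem_toFinset.mpr (List.mem_map.mpr
            ⟨enew, List.mem_cons_self, rfl⟩))
        · intro hmem
          obtain ⟨e, he, hq⟩ := List.mem_map.mp (List.mem_toFinset.mp hmem)
          exact hx2 (List.mem_toFinset.mpr (List.mem_map.mpr
            ⟨centry e, List.mem_cons_of_mem _ (List.mem_map.mpr ⟨e, he, rfl⟩), hq⟩))
      have hcard2 := Finset.card_le_card hsub
      rw [Finset.card_erase_of_mem hnmem] at hcard2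
      omega


theorem phase1 (g : ContextFreeGrammar.{0} T) : ∀ (h : ℕ) {n : g.NT} (t : PT g n) (m : ℕ),
    t.height ≤ h → 1 ≤ m → m ≤ t.height →
    ∃ (n' : g.NT) (t' : PT g n') (U V : List T),
      t'.height = m ∧ t.yield = U ++ t'.yield ++ V ∧
      g.Derives [Symbol.nonterminal n] (mt U ++ [Symbol.nonterminal n'] ++ mt V) ∧
      ∀ s : PT g n', ∃ t'' : PT g n, t''.yield = U ++ s.yield ++ V ∧
        t''.size + t'.size ≤ t.size + s.size := by
  intro h
  induction h with
  | zero => intro n t m h1 h2 h3; omega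
  | succ h ih =>
    intro n t m h1 h2 h3
    by_cases heq : t.height = m
    · refine ⟨n, t, [], [], heq, by simp, by simpa using Derives.refl _, ?_⟩
      intro s
      exact ⟨s, by simp, by omega⟩
    · have ht2 : 2 ≤ t.height := by omega
      obtain ⟨n', c, a, b, hh, hy, hsz, hctx, hrep⟩ := t.descend ht2
      obtain ⟨n'', t', U, V, hh', hy', hd', hrep'⟩ := ih c m (by omega) h2 (by omega)
      refine ⟨n'', t', a ++ U, V ++ b, hh', ?_, ?_, ?_⟩
      · rw [hy, hy']; simp [List.append_assoc]
      · refine hctx.trans ?_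
        have := derives_lift hd' (mt a) (mt b)
        simpa [mt, List.append_assoc] using this
      · intro s
        obtain ⟨tc, hc1, hc2⟩ := hrep' s
        obtain ⟨t'', h1', h2'⟩ := hrep tc
        refine ⟨t'', by rw [h1', hc1]; simp [List.append_assoc], by omega⟩

theorem cfg_pumping (g : ContextFreeGrammar.{0} T) :
    ∃ p : ℕ, 1 ≤ p ∧ ∀ w ∈ g.language, p ≤ w.length →
      ∃ u v x y z : List T, w = u ++ v ++ x ++ y ++ z ∧
        v.length + x.length + y.length ≤ p ∧ 1 ≤ v.length + y.length ∧
        u ++ v ++ v ++ x ++ y ++ y ++ z ∈ g.language := by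
  classical
  set K := (NTS g).card with hK
  refine ⟨Cg g ^ (K + 1), Nat.one_le_pow _ _ (by have := two_le_Cg (g := g); omega), ?_⟩
  intro w hw hlen
  rw [mem_language_iff] at hw
  obtain ⟨t₀, hyt₀⟩ := exists_tree hw
  -- minimal-size tree
  set Sset := {m : ℕ | ∃ t : PT g g.initial, t.yield = w ∧ t.size = m} with hSset
  have hne : Sset.Nonempty := ⟨t₀.size, t₀, hyt₀, rfl⟩
  obtain ⟨tm, hym, hsm⟩ := Nat.sInf_mem hne
  have hmin : ∀ t' : PT g g.initial, t'.yield = w → tm.size ≤ t'.size := by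
    intro t' h'
    rw [hsm]
    exact Nat.sInf_le ⟨t', h', rfl⟩
  -- height lower bound
  have hwlen : w.length ≤ Cg g ^ tm.height := by
    have := tm.yield_le
    rwa [hym] at this
  have hht : K + 1 ≤ tm.height := by
    by_contra hcon
    push_neg at hcon
    have : Cg g ^ tm.height ≤ Cg g ^ K := Nat.pow_le_pow_right (by have := two_le_Cg (g := g); omega) (by omega)
    have h2 : Cg g ^ (K+1) ≤ Cg g ^ K := by omega
    have h3 : Cg g ^ K < Cg g ^ (K+1) :=
      Nat.pow_lt_pow_right (by have := two_le_Cg (g := g); omega) (by omega)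
    omega
  obtain ⟨n₁, t₁, U₀, V₀, hh1, hy1, hd1, hrep1⟩ := phase1 g tm.height tm (K+1) le_rfl (by omega) hht
  -- core extraction
  have hcore := core g t₁.height t₁ t₁ le_rfl [] [] [] (by simp)
    (by simpa using Derives.refl [Symbol.nonterminal n₁])
    (fun s => ⟨s, by simp, by omega⟩)
    (by simp [hh1]; omega)
  obtain ⟨A, u, v, x, y, z, hy2, dtop, dmid, dinn, t'', hy'', hs''⟩ := hcore
  have hvxylen : v.length + x.length + y.length ≤ Cg g ^ (K + 1) := by
    have := t₁.yield_le
    rw [hy2, hh1] at this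
    simp only [List.length_append] at this
    omega
  have hvy : 1 ≤ v.length + y.length := by
    by_contra hcon
    push_neg at hcon
    have hv : v = [] := List.length_eq_zero_iff.mp (by omega)
    have hyy : y = [] := List.length_eq_zero_iff.mp (by omega)
    subst hv hyy
    have : t''.yield = t₁.yield := by rw [hy'', hy2]; simp
    obtain ⟨t₃, h31, h32⟩ := hrep1 t''
    have hyt₃ : t₃.yield = w := by rw [h31, this, ← hy1, hym]
    have := hmin t₃ hyt₃
    omega
  refine ⟨U₀ ++ u, v, x, y, z ++ V₀, ?_, hvxylen, hvy, ?_⟩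
  · rw [← hym, hy1, hy2]; simp [List.append_assoc]
  · rw [mem_language_iff]
    have s1 := hd1
    have s2 := derives_lift dtop (mt U₀) (mt V₀)
    have s3 := derives_lift dmid (mt U₀ ++ mt u) (mt z ++ mt V₀)
    have s4 := derives_lift dmid (mt U₀ ++ mt u ++ mt v) (mt y ++ mt z ++ mt V₀)
    have s5 := derives_lift dinn (mt U₀ ++ mt u ++ mt v ++ mt v) (mt y ++ mt y ++ mt z ++ mt V₀)
    have goal := s1.trans <| by
      simp only [List.append_assoc] at s2 s3 s4 s5 ⊢
      exact s2.trans (s3.trans (s4.trans s5))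
    simpa [mt, List.append_assoc] using goal

end CFPump

/-- Theorem (pumping incompatibility of crossing linkages): if for every `n` the language `L`
contains a word `P₁P₂P₃P₄` with all four segments of length at least `n`, carrying
pump-sensitive linkages `(P₁, P₃)` and `(P₂, P₄)`, then `L` is not context-free. -/
theorem crossing_linkages_not_contextFree {α : Type} (L : Language α)
    (h : ∀ n : ℕ, ∃ P₁ P₂ P₃ P₄ : List α,
      P₁ ++ P₂ ++ P₃ ++ P₄ ∈ L ∧
      (n ≤ P₁.length ∧ n ≤ P₂.length ∧ n ≤ P₃.length ∧ n ≤ P₄.length) ∧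
      HasPumpSensitiveLinkage L [P₁, P₂, P₃, P₄] 0 2 ∧
      HasPumpSensitiveLinkage L [P₁, P₂, P₃, P₄] 1 3) :
    ¬ L.IsContextFree := by
  rintro ⟨g, rfl⟩
  obtain ⟨p, hp1, hpump⟩ := CFPump.cfg_pumping g
  obtain ⟨P₁, P₂, P₃, P₄, hw, ⟨h1, h2, h3, h4⟩, link13, link24⟩ := h p
  obtain ⟨u, v, x, y, z, hw_eq, hbound, hvy, hmem2⟩ := hpump _ hw (by
    simp only [List.length_append]; omega)
  set Ps : List (List α) := [P₁, P₂, P₃, P₄] with hPs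
  have hflat : Ps.flatten = u ++ v ++ x ++ y ++ z := by
    rw [← hw_eq]; simp [hPs]
  have hlen4 : P₁.length + P₂.length + P₃.length + P₄.length =
      u.length + v.length + x.length + y.length + z.length := by
    have := congrArg List.length hw_eq
    simp only [List.length_append] at this
    omega
  rcases lt_or_ge u.length P₁.length with hc | hc1
  · refine absurd hmem2 (link13 u v x y z hflat hvy (Or.inl ⟨⟨u.length, ?_, ?_⟩, ?_⟩))
    · simp only [vxyRange, Set.mem_Ico]; omega
    · simp only [segRange, segStart, hPs, Set.mem_Ico]; simp; omega
    · rw [Set.disjoint_left]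
      intro a ha hb
      simp only [vxyRange, segRange, segStart, hPs, Set.mem_Ico] at ha hb
      simp at hb
      omega
  · rcases lt_or_ge u.length (P₁.length + P₂.length) with hc | hc2
    · refine absurd hmem2 (link24 u v x y z hflat hvy (Or.inl ⟨⟨u.length, ?_, ?_⟩, ?_⟩))
      · simp only [vxyRange, Set.mem_Ico]; omega
      · simp only [segRange, segStart, hPs, Set.mem_Ico]; simp; omega
      · rw [Set.disjoint_left]
        intro a ha hb
        simp only [vxyRange, segRange, segStart, hPs, Set.mem_Ico] at ha hb
        simp at hb
        omega
    · rcases lt_or_ge u.length (P₁.length + P₂.length + P₃.length) with hc | hc3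
      · refine absurd hmem2 (link13 u v x y z hflat hvy (Or.inr ⟨⟨u.length, ?_, ?_⟩, ?_⟩))
        · simp only [vxyRange, Set.mem_Ico]; omega
        · simp only [segRange, segStart, hPs, Set.mem_Ico]; simp; omega
        · rw [Set.disjoint_left]
          intro a ha hb
          simp only [vxyRange, segRange, segStart, hPs, Set.mem_Ico] at ha hb
          simp at hb
          omega
      · refine absurd hmem2 (link24 u v x y z hflat hvy (Or.inr ⟨⟨u.length, ?_, ?_⟩, ?_⟩))
        · simp only [vxyRange, Set.mem_Ico]; omega
        · simp only [segRange, segStart, hPs, Set.mem_Ico]; simp; omega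
        · rw [Set.disjoint_left]
          intro a ha hb
          simp only [vxyRange, segRange, segStart, hPs, Set.mem_Ico] at ha hb
          simp at hb
          omega
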